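/- arXiv:2101.06453 — 2 statements merged into one kernel-verified Lean document; each statement's English description precedes it below -/
import Mathlib

section
/- (Theorem 2, uniform ergodicity of independent Metropolis–Hastings) Let π and π̄ be everywhere-positive probability density functions on ℝ^d with π(x)/π̄(x) ≥ δ for all x ∈ ℝ^d, where δ > 0. Let P̄ be the independent Metropolis–Hastings kernel P̄(x, A) = ∫_A min(1, π̄(y)π(x)/(π̄(x)π(y))) π(y) dy + 1_A(x) · (1 − ∫_{ℝ^d} min(1, π̄(z)π(x)/(π̄(x)π(z))) π(z) dz). Then for every x ∈ ℝ^d and every integer k ≥ 0, ‖P̄^k(x,·) − μ_{π̄}‖_TV ≤ (1 − δ)^k, where μ_{π̄} is the probability measure on ℝ^d with density π̄ and P̄^k denotes the k-step kernel. -/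
open Real MeasureTheory ProbabilityTheory

/-- Total variation distance between two measures:
`‖μ − ν‖_TV = sup_B |μ(B) − ν(B)|`, the supremum over measurable sets `B`. -/
noncomputable def tvDist {X : Type*} [MeasurableSpace X] (μ ν : Measure X) : ℝ :=
  ⨆ B : {B : Set X // MeasurableSet B}, |(μ B.1).toReal - (ν B.1).toReal|

/-- The `k`-step transition kernel: `k`-fold composition of `P` with itself. -/
noncomputable def kIter {X : Type*} [MeasurableSpace X] (P : Kernel X X) : ℕ → Kernel X X
  | 0 => Kernel.id
  | (k + 1) => P ∘ₖ kIter P k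

open scoped ENNReal

variable {X : Type*} [MeasurableSpace X]

lemma tv_bdd (ν μ : Measure X) [IsProbabilityMeasure ν] [IsProbabilityMeasure μ] :
    ∀ B : {B : Set X // MeasurableSet B}, |(ν B.1).toReal - (μ B.1).toReal| ≤ 1 := by
  intro B
  have h1 : (ν B.1).toReal ≤ 1 := by
    simpa using ENNReal.toReal_mono ENNReal.one_ne_top prob_le_one
  have h2 : (μ B.1).toReal ≤ 1 := by
    simpa using ENNReal.toReal_mono ENNReal.one_ne_top prob_le_one
  have h3 : 0 ≤ (ν B.1).toReal := ENNReal.toReal_nonneg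
  have h4 : 0 ≤ (μ B.1).toReal := ENNReal.toReal_nonneg
  rw [abs_le]; constructor <;> linarith

lemma tvDist_le_one (ν μ : Measure X) [IsProbabilityMeasure ν] [IsProbabilityMeasure μ] :
    tvDist ν μ ≤ 1 :=
  ciSup_le (tv_bdd ν μ)

lemma le_tvDist (ν μ : Measure X) [IsProbabilityMeasure ν] [IsProbabilityMeasure μ]
    {B : Set X} (hB : MeasurableSet B) :
    |(ν B).toReal - (μ B).toReal| ≤ tvDist ν μ :=
  le_ciSup (f := fun B : {B : Set X // MeasurableSet B} => |(ν B.1).toReal - (μ B.1).toReal|)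
    ⟨1, by rintro r ⟨B, rfl⟩; exact tv_bdd ν μ B⟩ ⟨B, hB⟩

lemma tvDist_symm (ν μ : Measure X) : tvDist ν μ = tvDist μ ν := by
  simp [tvDist, abs_sub_comm]

lemma lint_diff_le (ν μ : Measure X) [IsProbabilityMeasure ν] [IsProbabilityMeasure μ]
    (g : X → ℝ≥0∞) {c : ℝ} (hc : 0 ≤ c) (hgc : ∀ y, g y ≤ ENNReal.ofReal c) :
    (∫⁻ y, g y ∂ν).toReal - (∫⁻ y, g y ∂μ).toReal ≤ c * tvDist ν μ := by
  obtain ⟨D, hD, h1, h2⟩ := hahn_decomposition (μ := ν) (ν := μ)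
  have hres : μ.restrict D ≤ ν.restrict D := by
    rw [Measure.le_iff]
    intro s hs
    rw [Measure.restrict_apply hs, Measure.restrict_apply hs]
    exact h1 _ (hs.inter hD) Set.inter_subset_right
  have hres2 : ν.restrict Dᶜ ≤ μ.restrict Dᶜ := by
    rw [Measure.le_iff]
    intro s hs
    rw [Measure.restrict_apply hs, Measure.restrict_apply hs]
    exact h2 _ (hs.inter hD.compl) Set.inter_subset_right
  set ρ := ν.restrict D - μ.restrict D with hρ
  have hadd : ρ + μ.restrict D = ν.restrict D := Measure.sub_add_cancel_of_le hres
  have hρuniv : ρ Set.univ = ν D - μ D := by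
    rw [hρ, Measure.sub_apply MeasurableSet.univ hres]
    simp
  have hDle : μ D ≤ ν D := h1 D hD subset_rfl
  have key : ∫⁻ y, g y ∂ν ≤ ∫⁻ y, g y ∂μ + ENNReal.ofReal c * (ν D - μ D) := by
    calc ∫⁻ y, g y ∂ν = (∫⁻ y in D, g y ∂ν) + ∫⁻ y in Dᶜ, g y ∂ν :=
          (lintegral_add_compl g hD).symm
      _ = ((∫⁻ y, g y ∂ρ) + ∫⁻ y in D, g y ∂μ) + ∫⁻ y in Dᶜ, g y ∂ν := by
          have h3 : ∫⁻ y in D, g y ∂ν = (∫⁻ y, g y ∂ρ) + ∫⁻ y in D, g y ∂μ := by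
            rw [← hadd, lintegral_add_measure]
          rw [h3]
      _ ≤ ((ENNReal.ofReal c * (ν D - μ D)) + ∫⁻ y in D, g y ∂μ) + ∫⁻ y in Dᶜ, g y ∂μ := by
          gcongr
          · calc ∫⁻ y, g y ∂ρ ≤ ∫⁻ _, ENNReal.ofReal c ∂ρ := lintegral_mono hgc
              _ = ENNReal.ofReal c * ρ Set.univ := lintegral_const _
              _ = ENNReal.ofReal c * (ν D - μ D) := by rw [hρuniv]
      _ = ∫⁻ y, g y ∂μ + ENNReal.ofReal c * (ν D - μ D) := by
          rw [← lintegral_add_compl g hD (μ := μ)]; ring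
  have hfinν : ∫⁻ y, g y ∂ν ≠ ⊤ := by
    refine ne_top_of_le_ne_top ?_ (lintegral_mono hgc)
    simp [lintegral_const]
  have hfinμ : ∫⁻ y, g y ∂μ ≠ ⊤ := by
    refine ne_top_of_le_ne_top ?_ (lintegral_mono hgc)
    simp [lintegral_const]
  have hfin2 : ENNReal.ofReal c * (ν D - μ D) ≠ ⊤ :=
    ENNReal.mul_ne_top ENNReal.ofReal_ne_top
      (ne_top_of_le_ne_top (measure_ne_top ν D) tsub_le_self)
  have := ENNReal.toReal_mono (by finiteness) key
  rw [ENNReal.toReal_add hfinμ hfin2, ENNReal.toReal_mul,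
    ENNReal.toReal_sub_of_le hDle (measure_ne_top ν D), ENNReal.toReal_ofReal hc] at this
  have htv : (ν D).toReal - (μ D).toReal ≤ tvDist ν μ :=
    le_trans (le_abs_self _) (le_tvDist ν μ hD)
  nlinarith [this, htv]

lemma lint_diff_abs_le (ν μ : Measure X) [IsProbabilityMeasure ν] [IsProbabilityMeasure μ]
    (g : X → ℝ≥0∞) {c : ℝ} (hc : 0 ≤ c) (hgc : ∀ y, g y ≤ ENNReal.ofReal c) :
    |(∫⁻ y, g y ∂ν).toReal - (∫⁻ y, g y ∂μ).toReal| ≤ c * tvDist ν μ := by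
  rw [abs_sub_le_iff]
  refine ⟨lint_diff_le ν μ g hc hgc, ?_⟩
  rw [tvDist_symm]
  exact lint_diff_le μ ν g hc hgc

lemma kIter_isMarkov {X : Type*} [MeasurableSpace X] (P : Kernel X X) [IsMarkovKernel P] :
    ∀ k, IsMarkovKernel (kIter P k)
  | 0 => by rw [kIter]; infer_instance
  | (k + 1) => by rw [kIter]; have := kIter_isMarkov P k; infer_instance


/-- Theorem 2 (uniform ergodicity of independent Metropolis–Hastings): if `π` and `π̄`
are everywhere-positive probability densities on `ℝ^d` with `π(x)/π̄(x) ≥ δ > 0`, and `P̄`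
is the independent Metropolis–Hastings kernel
`P̄(x, A) = ∫_A min(1, π̄(y)π(x)/(π̄(x)π(y))) π(y) dy
          + 1_A(x)·(1 − ∫ min(1, π̄(z)π(x)/(π̄(x)π(z))) π(z) dz)`,
then `‖P̄^k(x,·) − μ_{π̄}‖_TV ≤ (1 − δ)^k` for every `x` and every `k ≥ 0`, where `μ_{π̄}`
is the probability measure with density `π̄`. -/
theorem stmt8 {d : ℕ} (hd : 1 ≤ d) (p pb : EuclideanSpace ℝ (Fin d) → ℝ)
    (hpmeas : Measurable p) (hpbmeas : Measurable pb)
    (hppos : ∀ x, 0 < p x) (hpbpos : ∀ x, 0 < pb x)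
    (hpint : ∫ x : EuclideanSpace ℝ (Fin d), p x = 1)
    (hpbint : ∫ x : EuclideanSpace ℝ (Fin d), pb x = 1)
    (δ : ℝ) (hδ : 0 < δ) (hratio : ∀ x, δ ≤ p x / pb x)
    (P : Kernel (EuclideanSpace ℝ (Fin d)) (EuclideanSpace ℝ (Fin d)))
    [IsMarkovKernel P]
    (hP : ∀ (x : EuclideanSpace ℝ (Fin d)) (A : Set (EuclideanSpace ℝ (Fin d))),
      MeasurableSet A →
      (P x A).toReal =
        (∫ y in A, min 1 (pb y * p x / (pb x * p y)) * p y) +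
          A.indicator (fun _ => (1 : ℝ)) x *
            (1 - ∫ z : EuclideanSpace ℝ (Fin d), min 1 (pb z * p x / (pb x * p z)) * p z))
    (x : EuclideanSpace ℝ (Fin d)) (k : ℕ) :
    tvDist (kIter P k x)
      (volume.withDensity (fun y => ENNReal.ofReal (pb y))) ≤ (1 - δ) ^ k := by
  set μ : Measure (EuclideanSpace ℝ (Fin d)) :=
    volume.withDensity (fun y => ENNReal.ofReal (pb y)) with hμdef
  -- integrability of the densities
  have hpInt : Integrable p := by
    by_contra h; rw [integral_undef h] at hpint; norm_num at hpint
  have hpbInt : Integrable pb := by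
    by_contra h; rw [integral_undef h] at hpbint; norm_num at hpbint
  -- the sub-density q and its properties
  set q : EuclideanSpace ℝ (Fin d) → EuclideanSpace ℝ (Fin d) → ℝ :=
    fun x y => min 1 (pb y * p x / (pb x * p y)) * p y with hqdef
  have hqmeas : Measurable fun z : EuclideanSpace ℝ (Fin d) × EuclideanSpace ℝ (Fin d) =>
      q z.1 z.2 := by
    rw [hqdef]
    exact (measurable_const.min
      (((hpbmeas.comp measurable_snd).mul (hpmeas.comp measurable_fst)).div
        ((hpbmeas.comp measurable_fst).mul (hpmeas.comp measurable_snd)))).mul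
      (hpmeas.comp measurable_snd)
  have hqxmeas : ∀ x, Measurable (q x) := by
    intro x
    rw [hqdef]
    exact (measurable_const.min
      ((hpbmeas.mul measurable_const).div (measurable_const.mul hpmeas))).mul hpmeas
  have hq_nonneg : ∀ x y, 0 ≤ q x y := by
    intro x y
    have h1 : (0:ℝ) ≤ pb y * p x / (pb x * p y) :=
      div_nonneg (mul_nonneg (hpbpos y).le (hppos x).le)
        (mul_nonneg (hpbpos x).le (hppos y).le)
    exact mul_nonneg (le_min one_pos.le h1) (hppos y).le
  have hq_le : ∀ x y, q x y ≤ p y := fun x y =>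
    mul_le_of_le_one_left (hppos y).le (min_le_left _ _)
  have hq_ge : ∀ x y, δ * pb y ≤ q x y := by
    intro x y
    have hpy := (hppos y).ne'
    have hpbx := (hpbpos x).ne'
    rcases le_total 1 (pb y * p x / (pb x * p y)) with h | h
    · rw [hqdef]; simp only [min_eq_left h, one_mul]
      exact (le_div_iff₀ (hpbpos y)).mp (hratio y)
    · rw [hqdef]; simp only [min_eq_right h]
      have he : pb y * p x / (pb x * p y) * p y = pb y * (p x / pb x) := by
        field_simp
      rw [he]
      calc δ * pb y = pb y * δ := mul_comm _ _
        _ ≤ pb y * (p x / pb x) := mul_le_mul_of_nonneg_left (hratio x) (hpbpos y).le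
  have hqInt : ∀ x, Integrable (q x) := by
    intro x
    refine hpInt.mono' (hqxmeas x).aestronglyMeasurable (ae_of_all _ fun y => ?_)
    rw [Real.norm_eq_abs, abs_of_nonneg (hq_nonneg x y)]
    exact hq_le x y
  set r : EuclideanSpace ℝ (Fin d) → ℝ := fun x => ∫ y, q x y with hrdef
  have hrmeas : Measurable r :=
    hqmeas.stronglyMeasurable.integral_prod_right'.measurable
  have hr_nonneg : ∀ x, 0 ≤ r x := fun x => integral_nonneg (hq_nonneg x)
  have hr_le_one : ∀ x, r x ≤ 1 := by
    intro x
    rw [hrdef, ← hpint]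
    exact integral_mono (hqInt x) hpInt (hq_le x)
  -- bridge hP to q and r
  have hPq : ∀ (y : EuclideanSpace ℝ (Fin d)) {B : Set (EuclideanSpace ℝ (Fin d))},
      MeasurableSet B →
      (P y B).toReal = (∫ z in B, q y z) + B.indicator (fun _ => (1:ℝ)) y * (1 - r y) :=
    fun y B hB => hP y B hB
  have hδ1 : δ ≤ 1 := by
    have h1 : ∀ y, δ * pb y ≤ p y := fun y => (le_div_iff₀ (hpbpos y)).mp (hratio y)
    have h2 : ∫ y, δ * pb y ≤ ∫ y, p y := integral_mono (hpbInt.const_mul δ) hpInt h1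
    rw [integral_const_mul, hpbint, mul_one, hpint] at h2
    exact h2
  -- μ facts
  have hμB : ∀ {B : Set (EuclideanSpace ℝ (Fin d))}, MeasurableSet B →
      μ B = ENNReal.ofReal (∫ z in B, pb z) := by
    intro B hB
    rw [hμdef, withDensity_apply _ hB,
      ← ofReal_integral_eq_lintegral_ofReal hpbInt.restrict
        (ae_of_all _ fun z => (hpbpos z).le)]
  haveI hμprob : IsProbabilityMeasure μ := by
    constructor
    rw [hμB MeasurableSet.univ, setIntegral_univ, hpbint, ENNReal.ofReal_one]
  -- minorization
  have hminor : ∀ (y : EuclideanSpace ℝ (Fin d)) {B : Set (EuclideanSpace ℝ (Fin d))},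
      MeasurableSet B → ENNReal.ofReal δ * μ B ≤ P y B := by
    intro y B hB
    have h2 : ∫ z in B, δ * pb z ≤ ∫ z in B, q y z :=
      integral_mono (hpbInt.const_mul δ).restrict (hqInt y).restrict (fun z => hq_ge y z)
    have h3 : 0 ≤ B.indicator (fun _ => (1:ℝ)) y * (1 - r y) :=
      mul_nonneg (Set.indicator_nonneg (fun _ _ => one_pos.le) y)
        (by linarith [hr_le_one y])
    have h1 : δ * ∫ z in B, pb z ≤ (P y B).toReal := by
      rw [hPq y hB, ← integral_const_mul]
      exact le_add_of_le_of_nonneg h2 h3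
    rw [hμB hB, ← ENNReal.ofReal_mul hδ.le, ← ENNReal.ofReal_toReal (measure_ne_top (P y) B)]
    exact ENNReal.ofReal_le_ofReal h1
  -- symmetrized density
  set m : EuclideanSpace ℝ (Fin d) → EuclideanSpace ℝ (Fin d) → ℝ :=
    fun x y => min (pb x * p y) (pb y * p x) with hmdef
  have hmsymm : ∀ x y, m x y = m y x := fun x y => min_comm _ _
  have hmq : ∀ x y, pb x * q x y = m x y := by
    intro x y
    have hpy := (hppos y).ne'
    have hpbx := (hpbpos x).ne'
    rcases le_total (pb y * p x / (pb x * p y)) 1 with h | h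
    · rw [hqdef, hmdef]; simp only [min_eq_right h]
      have h2 : pb y * p x ≤ pb x * p y := by
        have := (div_le_one (mul_pos (hpbpos x) (hppos y))).mp h
        linarith
      simp only [min_eq_right h2]
      field_simp
    · rw [hqdef, hmdef]; simp only [min_eq_left h]
      have h2 : pb x * p y ≤ pb y * p x := by
        have := (one_le_div (mul_pos (hpbpos x) (hppos y))).mp h
        linarith
      simp only [min_eq_left h2]; ring
  have hm_nonneg : ∀ x y, 0 ≤ m x y := by
    intro x y
    exact le_min (mul_nonneg (hpbpos x).le (hppos y).le)
      (mul_nonneg (hpbpos y).le (hppos x).le)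
  have hmmeas : Measurable fun z : EuclideanSpace ℝ (Fin d) × EuclideanSpace ℝ (Fin d) =>
      m z.1 z.2 := by
    rw [hmdef]
    exact ((hpbmeas.comp measurable_fst).mul (hpmeas.comp measurable_snd)).min
      ((hpbmeas.comp measurable_snd).mul (hpmeas.comp measurable_fst))
  have hmxmeas : ∀ x, Measurable (m x) := by
    intro x
    rw [hmdef]
    exact (measurable_const.mul hpmeas).min (hpbmeas.mul measurable_const)
  have hmInt : ∀ x, Integrable (m x) := by
    intro x
    refine (hpInt.const_mul (pb x)).mono' (hmxmeas x).aestronglyMeasurable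
      (ae_of_all _ fun y => ?_)
    rw [Real.norm_eq_abs, abs_of_nonneg (hm_nonneg x y)]
    exact min_le_left _ _
  have hmint_eq : ∀ x, ∫ y, m x y = pb x * r x := by
    intro x
    rw [hrdef, ← integral_const_mul]
    exact integral_congr_ae (ae_of_all _ fun y => (hmq x y).symm)
  -- invariance of μ under P
  have hinv : ∀ {B : Set (EuclideanSpace ℝ (Fin d))}, MeasurableSet B →
      ∫⁻ y, P y B ∂μ = μ B := by
    intro B hB
    have hptwise : ∀ y, ENNReal.ofReal (pb y) * P y B
        = (∫⁻ z in B, ENNReal.ofReal (m y z)) +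
          ENNReal.ofReal (pb y * (B.indicator (fun _ => (1:ℝ)) y * (1 - r y))) := by
      intro y
      have hI1 : 0 ≤ ∫ z in B, q y z := integral_nonneg (fun z => hq_nonneg y z)
      have hI2 : 0 ≤ B.indicator (fun _ => (1:ℝ)) y * (1 - r y) :=
        mul_nonneg (Set.indicator_nonneg (fun _ _ => one_pos.le) y)
          (by linarith [hr_le_one y])
      have e1 : pb y * ∫ z in B, q y z = ∫ z in B, m y z := by
        rw [← integral_const_mul]
        exact integral_congr_ae (ae_of_all _ fun z => hmq y z)
      calc ENNReal.ofReal (pb y) * P y B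
          = ENNReal.ofReal (pb y) * ENNReal.ofReal ((P y B).toReal) := by
            rw [ENNReal.ofReal_toReal (measure_ne_top (P y) B)]
        _ = ENNReal.ofReal (pb y * ((∫ z in B, q y z) +
              B.indicator (fun _ => (1:ℝ)) y * (1 - r y))) := by
            rw [hPq y hB, ENNReal.ofReal_mul (hpbpos y).le]
        _ = ENNReal.ofReal (pb y * ∫ z in B, q y z) +
              ENNReal.ofReal (pb y * (B.indicator (fun _ => (1:ℝ)) y * (1 - r y))) := by
            rw [mul_add, ENNReal.ofReal_add (mul_nonneg (hpbpos y).le hI1)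
              (mul_nonneg (hpbpos y).le hI2)]
        _ = (∫⁻ z in B, ENNReal.ofReal (m y z)) +
              ENNReal.ofReal (pb y * (B.indicator (fun _ => (1:ℝ)) y * (1 - r y))) := by
            rw [e1, ofReal_integral_eq_lintegral_ofReal (hmInt y).restrict
              (ae_of_all _ fun z => hm_nonneg y z)]
    calc ∫⁻ y, P y B ∂μ
        = ∫⁻ y, ENNReal.ofReal (pb y) * P y B := by
          rw [hμdef]
          exact lintegral_withDensity_eq_lintegral_mul volume hpbmeas.ennreal_ofReal
            (P.measurable_coe hB)
      _ = ∫⁻ y, ((∫⁻ z in B, ENNReal.ofReal (m y z)) +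
            ENNReal.ofReal (pb y * (B.indicator (fun _ => (1:ℝ)) y * (1 - r y)))) :=
          lintegral_congr hptwise
      _ = (∫⁻ y, ∫⁻ z in B, ENNReal.ofReal (m y z)) +
            ∫⁻ y, ENNReal.ofReal (pb y * (B.indicator (fun _ => (1:ℝ)) y * (1 - r y))) :=
          lintegral_add_left (Measurable.lintegral_prod_right
            (f := fun y z => ENNReal.ofReal (m y z))
            (by exact hmmeas.ennreal_ofReal)) _
      _ = (∫⁻ z in B, ∫⁻ y, ENNReal.ofReal (m y z)) +
            ∫⁻ y in B, ENNReal.ofReal (pb y * (1 - r y)) := by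
          congr 1
          · exact lintegral_lintegral_swap hmmeas.ennreal_ofReal.aemeasurable
          · rw [← lintegral_indicator hB]
            refine lintegral_congr fun y => ?_
            by_cases hy : y ∈ B
            · simp [hy]
            · simp [hy]
      _ = (∫⁻ z in B, ENNReal.ofReal (pb z * r z)) +
            ∫⁻ y in B, ENNReal.ofReal (pb y * (1 - r y)) := by
          congr 1
          refine setLIntegral_congr_fun hB (fun z _ => ?_)
          have hsy : (fun y => ENNReal.ofReal (m y z)) = fun y => ENNReal.ofReal (m z y) :=
            funext fun y => by rw [hmsymm]
          rw [hsy, ← ofReal_integral_eq_lintegral_ofReal (hmInt z)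
            (ae_of_all _ fun y => hm_nonneg z y), hmint_eq z]
      _ = ∫⁻ z in B, (ENNReal.ofReal (pb z * r z) + ENNReal.ofReal (pb z * (1 - r z))) :=
          (lintegral_add_left ((hpbmeas.mul hrmeas).ennreal_ofReal) _).symm
      _ = ∫⁻ z in B, ENNReal.ofReal (pb z) := by
          refine setLIntegral_congr_fun hB (fun z _ => ?_)
          rw [← ENNReal.ofReal_add (mul_nonneg (hpbpos z).le (hr_nonneg z))
            (mul_nonneg (hpbpos z).le (by linarith [hr_le_one z]))]
          ring_nf
      _ = μ B := by rw [hμdef, withDensity_apply _ hB]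
  -- the induction
  induction k with
  | zero =>
    simp only [kIter]
    rw [pow_zero]
    haveI : IsProbabilityMeasure ((Kernel.id :
        Kernel (EuclideanSpace ℝ (Fin d)) (EuclideanSpace ℝ (Fin d))) x) := by
      rw [Kernel.id_apply]; infer_instance
    exact tvDist_le_one _ _
  | succ k ih =>
    haveI hMk : IsMarkovKernel (kIter P k) := kIter_isMarkov P k
    haveI : IsProbabilityMeasure (kIter P k x) := inferInstance
    have h1δ : (0:ℝ) ≤ 1 - δ := by linarith
    have hstep : tvDist (kIter P (k+1) x) μ ≤ (1 - δ) * tvDist (kIter P k x) μ := by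
      apply ciSup_le
      rintro ⟨B, hB⟩
      have hcomp : kIter P (k+1) x B = ∫⁻ y, P y B ∂(kIter P k x) := by
        show (P ∘ₖ kIter P k) x B = _
        exact Kernel.comp_apply' P (kIter P k) x hB
      set c₀ := ENNReal.ofReal δ * μ B with hc₀
      have hc₀fin : c₀ ≠ ⊤ := ENNReal.mul_ne_top ENNReal.ofReal_ne_top (measure_ne_top μ B)
      set g : EuclideanSpace ℝ (Fin d) → ℝ≥0∞ := fun y => P y B - c₀ with hg
      have hsplit : ∀ y, P y B = c₀ + g y := fun y => (add_tsub_cancel_of_le (hminor y hB)).symm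
      have hgle : ∀ y, g y ≤ ENNReal.ofReal (1 - δ) := by
        intro y
        rw [hg]
        refine tsub_le_iff_right.mpr ?_
        have h5 : P y B + ENNReal.ofReal δ * μ Bᶜ ≤ 1 := by
          calc P y B + ENNReal.ofReal δ * μ Bᶜ ≤ P y B + P y Bᶜ := by
                gcongr
                exact hminor y hB.compl
            _ = P y Set.univ := measure_add_measure_compl hB
            _ = 1 := measure_univ
        have h6 : (1:ℝ≥0∞) = (ENNReal.ofReal (1-δ) + c₀) + ENNReal.ofReal δ * μ Bᶜ := by
          rw [hc₀, add_assoc, ← mul_add, measure_add_measure_compl hB, measure_univ, mul_one,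
            ← ENNReal.ofReal_add (by linarith) hδ.le]
          norm_num
        rw [h6] at h5
        exact (ENNReal.add_le_add_iff_right
          (ENNReal.mul_ne_top ENNReal.ofReal_ne_top (measure_ne_top μ Bᶜ))).mp h5
      have hAν : ∫⁻ y, g y ∂(kIter P k x) ≠ ⊤ := by
        refine ne_top_of_le_ne_top ?_ (lintegral_mono hgle)
        simp [lintegral_const]
      have hAμ : ∫⁻ y, g y ∂μ ≠ ⊤ := by
        refine ne_top_of_le_ne_top ?_ (lintegral_mono hgle)
        simp [lintegral_const]
      have e1 : (kIter P (k+1) x B).toReal = c₀.toReal + (∫⁻ y, g y ∂(kIter P k x)).toReal := by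
        rw [hcomp, lintegral_congr hsplit, lintegral_add_left measurable_const,
          lintegral_const, measure_univ, mul_one, ENNReal.toReal_add hc₀fin hAν]
      have e2 : (μ B).toReal = c₀.toReal + (∫⁻ y, g y ∂μ).toReal := by
        rw [← hinv hB, lintegral_congr hsplit, lintegral_add_left measurable_const,
          lintegral_const, measure_univ, mul_one, ENNReal.toReal_add hc₀fin hAμ]
      rw [e1, e2]
      have hfinal := lint_diff_abs_le (kIter P k x) μ g h1δ hgle
      simpa [add_sub_add_left_eq_sub] using hfinal
    calc tvDist (kIter P (k+1) x) μ ≤ (1 - δ) * tvDist (kIter P k x) μ := hstep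
      _ ≤ (1 - δ) * (1 - δ) ^ k := mul_le_mul_of_nonneg_left ih h1δ
      _ = (1 - δ) ^ (k+1) := by ring
end

section
/- (Minorization for the inexact IMHR chain) Let π and π̄ be everywhere-positive probability density functions on ℝ^d with π(x)/π̄(x) ≥ δ for all x ∈ ℝ^d, where δ > 0, and let q be a probability measure on ℝ^d. Define the kernel P̄(x, A) = ∫_A min(1, π̄(y)π(x)/(π̄(x)π(y))) q(dy) + 1_A(x) · (1 − ∫_{ℝ^d} min(1, π̄(z)π(x)/(π̄(x)π(z))) q(dz)). Assume C = ∫_{ℝ^d} (π̄/π) dq satisfies 0 < C < ∞ and set ν(A) = (1/C) ∫_A (π̄/π) dq. Then for every x ∈ ℝ^d and every measurable A, P̄(x, A) ≥ C δ ν(A); consequently ‖P̄^k(x,·) − ν‖_TV ≤ (1 − Cδ)^k for all x ∈ ℝ^d and all integers k ≥ 0. -/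
open Real MeasureTheory ProbabilityTheory

/-- Layer-cake comparison: if two probability measures differ by at most `D` on every
measurable set, integrals of a `[0, M]`-valued measurable function differ by at most `M*D`. -/
lemma layercake_diff_le {X : Type*} [MeasurableSpace X] (μ₁ μ₂ : Measure X)
    [IsProbabilityMeasure μ₁] [IsProbabilityMeasure μ₂]
    {g : X → ℝ} (hg : Measurable g) {M D : ℝ} (hM : 0 ≤ M) (hD : 0 ≤ D)
    (hg0 : ∀ x, 0 ≤ g x) (hgM : ∀ x, g x ≤ M)
    (h : ∀ s : Set X, MeasurableSet s → (μ₁ s).toReal ≤ (μ₂ s).toReal + D) :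
    ∫ x, g x ∂μ₁ ≤ (∫ x, g x ∂μ₂) + M * D := by
  have key : ∀ t : ℝ, μ₁ {a | t < g a} ≤ μ₂ {a | t < g a} + ENNReal.ofReal D := by
    intro t
    have hs : MeasurableSet {a | t < g a} := measurableSet_lt measurable_const hg
    have h1 := h _ hs
    have hne1 : μ₁ {a | t < g a} ≠ ⊤ := measure_ne_top _ _
    have hne2 : μ₂ {a | t < g a} ≠ ⊤ := measure_ne_top _ _
    calc μ₁ {a | t < g a} = ENNReal.ofReal ((μ₁ {a | t < g a}).toReal) :=
          (ENNReal.ofReal_toReal hne1).symm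
      _ ≤ ENNReal.ofReal ((μ₂ {a | t < g a}).toReal + D) := ENNReal.ofReal_le_ofReal h1
      _ = μ₂ {a | t < g a} + ENNReal.ofReal D := by
          rw [ENNReal.ofReal_add ENNReal.toReal_nonneg hD, ENNReal.ofReal_toReal hne2]
  have lhs_eq : ∫⁻ ω, ENNReal.ofReal (g ω) ∂μ₁ = ∫⁻ t in Set.Ioi 0, μ₁ {a | t < g a} :=
    lintegral_eq_lintegral_meas_lt μ₁ (ae_of_all _ hg0) hg.aemeasurable
  have rhs_eq : ∫⁻ ω, ENNReal.ofReal (g ω) ∂μ₂ = ∫⁻ t in Set.Ioi 0, μ₂ {a | t < g a} :=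
    lintegral_eq_lintegral_meas_lt μ₂ (ae_of_all _ hg0) hg.aemeasurable
  have hanti : Antitone fun t : ℝ => μ₂ {a | t < g a} := by
    intro s t hst
    exact measure_mono fun a ha => lt_of_le_of_lt hst ha
  have hmble₂ : Measurable fun t : ℝ => μ₂ {a | t < g a} := hanti.measurable
  have hsplit : Set.Ioi (0:ℝ) = Set.Ioc 0 M ∪ Set.Ioi M := (Set.Ioc_union_Ioi_eq_Ioi hM).symm
  have hvanish : ∫⁻ t in Set.Ioi M, μ₁ {a | t < g a} = 0 := by
    rw [setLIntegral_congr_fun measurableSet_Ioi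
      (fun t (ht : M < t) => ?_), lintegral_zero]
    have : {a | t < g a} = ∅ := by
      ext a; simp only [Set.mem_setOf_eq, Set.mem_empty_iff_false, iff_false, not_lt]
      exact (hgM a).trans ht.le
    rw [this, measure_empty]
  have step1 : ∫⁻ t in Set.Ioi 0, μ₁ {a | t < g a} = ∫⁻ t in Set.Ioc 0 M, μ₁ {a | t < g a} := by
    rw [hsplit, lintegral_union measurableSet_Ioi Set.Ioc_disjoint_Ioi_same, hvanish, add_zero]
  have step2 : ∫⁻ t in Set.Ioc 0 M, μ₁ {a | t < g a} ≤
      (∫⁻ t in Set.Ioi 0, μ₂ {a | t < g a}) + ENNReal.ofReal D * ENNReal.ofReal M := by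
    calc ∫⁻ t in Set.Ioc 0 M, μ₁ {a | t < g a}
        ≤ ∫⁻ t in Set.Ioc 0 M, (μ₂ {a | t < g a} + ENNReal.ofReal D) :=
          lintegral_mono fun t => key t
      _ = (∫⁻ t in Set.Ioc 0 M, μ₂ {a | t < g a}) + ENNReal.ofReal D * ENNReal.ofReal M := by
          rw [lintegral_add_right _ measurable_const, lintegral_const,
            Measure.restrict_apply MeasurableSet.univ, Set.univ_inter, Real.volume_Ioc,
            sub_zero]
      _ ≤ (∫⁻ t in Set.Ioi 0, μ₂ {a | t < g a}) + ENNReal.ofReal D * ENNReal.ofReal M := by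
          gcongr
          exact Set.Ioc_subset_Ioi_self
  have hfin₂ : ∫⁻ ω, ENNReal.ofReal (g ω) ∂μ₂ ≠ ⊤ := by
    have hb : ∫⁻ ω, ENNReal.ofReal (g ω) ∂μ₂ ≤ ENNReal.ofReal M := by
      calc ∫⁻ ω, ENNReal.ofReal (g ω) ∂μ₂
          ≤ ∫⁻ _, ENNReal.ofReal M ∂μ₂ :=
            lintegral_mono fun ω => ENNReal.ofReal_le_ofReal (hgM ω)
        _ = ENNReal.ofReal M := by simp
    exact ne_of_lt (lt_of_le_of_lt hb ENNReal.ofReal_lt_top)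
  have main : ∫⁻ ω, ENNReal.ofReal (g ω) ∂μ₁ ≤
      (∫⁻ ω, ENNReal.ofReal (g ω) ∂μ₂) + ENNReal.ofReal D * ENNReal.ofReal M := by
    rw [lhs_eq, rhs_eq, step1]; exact step2
  have e1 : ∫ x, g x ∂μ₁ = (∫⁻ ω, ENNReal.ofReal (g ω) ∂μ₁).toReal :=
    integral_eq_lintegral_of_nonneg_ae (ae_of_all _ hg0) hg.aestronglyMeasurable
  have e2 : ∫ x, g x ∂μ₂ = (∫⁻ ω, ENNReal.ofReal (g ω) ∂μ₂).toReal :=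
    integral_eq_lintegral_of_nonneg_ae (ae_of_all _ hg0) hg.aestronglyMeasurable
  have hfinsum : (∫⁻ ω, ENNReal.ofReal (g ω) ∂μ₂) + ENNReal.ofReal D * ENNReal.ofReal M ≠ ⊤ := by
    simp [hfin₂, ENNReal.mul_ne_top, ENNReal.add_ne_top]
  have := ENNReal.toReal_mono hfinsum main
  rw [ENNReal.toReal_add hfin₂ (by simp [ENNReal.mul_ne_top]), ENNReal.toReal_mul,
    ENNReal.toReal_ofReal hD, ENNReal.toReal_ofReal hM] at this
  rw [e1, e2]
  linarith

/-- Minorization for the inexact IMHR chain: with everywhere-positive densities `π`, `π̄`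
satisfying `π/π̄ ≥ δ > 0`, proposal measure `q`, kernel
`P̄(x, A) = ∫_A min(1, π̄(y)π(x)/(π̄(x)π(y))) q(dy)
          + 1_A(x)·(1 − ∫ min(1, π̄(z)π(x)/(π̄(x)π(z))) q(dz))`,
`C = ∫ (π̄/π) dq ∈ (0, ∞)` and `ν(A) = (1/C)∫_A (π̄/π) dq`, one has
`P̄(x, A) ≥ Cδ·ν(A)` for all `x` and measurable `A`, and consequently
`‖P̄^k(x,·) − ν‖_TV ≤ (1 − Cδ)^k` for all `x` and all `k ≥ 0`. -/
theorem stmt10 {d : ℕ} (hd : 1 ≤ d) (p pb : EuclideanSpace ℝ (Fin d) → ℝ)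
    (hpmeas : Measurable p) (hpbmeas : Measurable pb)
    (hppos : ∀ x, 0 < p x) (hpbpos : ∀ x, 0 < pb x)
    (hpint : ∫ x : EuclideanSpace ℝ (Fin d), p x = 1)
    (hpbint : ∫ x : EuclideanSpace ℝ (Fin d), pb x = 1)
    (δ : ℝ) (hδ : 0 < δ) (hratio : ∀ x, δ ≤ p x / pb x)
    (q : Measure (EuclideanSpace ℝ (Fin d))) [IsProbabilityMeasure q]
    (P : Kernel (EuclideanSpace ℝ (Fin d)) (EuclideanSpace ℝ (Fin d)))
    [IsMarkovKernel P]
    (hP : ∀ (x : EuclideanSpace ℝ (Fin d)) (A : Set (EuclideanSpace ℝ (Fin d))),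
      MeasurableSet A →
      (P x A).toReal =
        (∫ y in A, min 1 (pb y * p x / (pb x * p y)) ∂q) +
          A.indicator (fun _ => (1 : ℝ)) x *
            (1 - ∫ z, min 1 (pb z * p x / (pb x * p z)) ∂q))
    (hint : Integrable (fun x => pb x / p x) q)
    (C : ℝ) (hC : C = ∫ x, pb x / p x ∂q) (hCpos : 0 < C)
    (ν : Measure (EuclideanSpace ℝ (Fin d)))
    (hν : ν = (ENNReal.ofReal C)⁻¹ •
      q.withDensity (fun x => ENNReal.ofReal (pb x / p x))) :
    (∀ (x : EuclideanSpace ℝ (Fin d)) (A : Set (EuclideanSpace ℝ (Fin d))),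
        MeasurableSet A → ENNReal.ofReal (C * δ) * ν A ≤ P x A) ∧
      ∀ (x : EuclideanSpace ℝ (Fin d)) (k : ℕ),
        tvDist (kIter P k x) ν ≤ (1 - C * δ) ^ k := by
  set r : EuclideanSpace ℝ (Fin d) → ℝ := fun x => pb x / p x with hr_def
  have hr_meas : Measurable r := hpbmeas.div hpmeas
  have hr_pos : ∀ x, 0 < r x := fun x => div_pos (hpbpos x) (hppos x)
  set m : EuclideanSpace ℝ (Fin d) → EuclideanSpace ℝ (Fin d) → ℝ :=
    fun x y => min 1 (pb y * p x / (pb x * p y)) with hm_def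
  have hC' : C = ∫ x, r x ∂q := hC
  have hm_eq : ∀ x y, m x y = min 1 (r y / r x) := by
    intro x y
    have hpy := (hppos y).ne'
    have hpx := (hppos x).ne'
    have hpby := (hpbpos y).ne'
    have hpbx := (hpbpos x).ne'
    have h1 : pb y * p x / (pb x * p y) = r y / r x := by
      simp only [hr_def]
      field_simp
    simp only [hm_def]
    rw [h1]
  have hm0 : ∀ x y, 0 ≤ m x y := by
    intro x y
    have h2 : (0:ℝ) ≤ pb y * p x / (pb x * p y) :=
      div_nonneg (mul_nonneg (hpbpos y).le (hppos x).le)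
        (mul_nonneg (hpbpos x).le (hppos y).le)
    exact le_min zero_le_one h2
  have hm1 : ∀ x y, m x y ≤ 1 := fun x y => min_le_left _ _
  have hδr : ∀ x, δ * r x ≤ 1 := by
    intro x
    calc δ * r x ≤ (p x / pb x) * r x :=
          mul_le_mul_of_nonneg_right (hratio x) (hr_pos x).le
      _ = 1 := by
          simp only [hr_def]
          rw [div_mul_div_comm, mul_comm (pb x) (p x)]
          exact div_self (mul_pos (hppos x) (hpbpos x)).ne'
  have hmδ : ∀ x y, δ * r y ≤ m x y := by
    intro x y
    rw [hm_eq]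
    refine le_min (hδr y) ?_
    have hinv : (r x)⁻¹ = p x / pb x := by
      simp only [hr_def]
      rw [inv_div]
    have h2 : δ * r y ≤ (p x / pb x) * r y :=
      mul_le_mul_of_nonneg_right (hratio x) (hr_pos y).le
    rw [div_eq_mul_inv, hinv]
    linarith [h2]
  have hm_unc : Measurable (Function.uncurry m) := by
    apply Measurable.min measurable_const
    exact (((hpbmeas.comp measurable_snd).mul (hpmeas.comp measurable_fst)).div
      ((hpbmeas.comp measurable_fst).mul (hpmeas.comp measurable_snd)))
  have hm_meas : ∀ x, Measurable (m x) := fun x => hm_unc.comp measurable_prodMk_left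
  set a : EuclideanSpace ℝ (Fin d) → ℝ := fun x => ∫ z, m x z ∂q with ha_def
  have ha_sm : StronglyMeasurable a := hm_unc.stronglyMeasurable.integral_prod_right
  have hmx_int : ∀ x (μ : Measure (EuclideanSpace ℝ (Fin d))), IsFiniteMeasure μ →
      Integrable (m x) μ := by
    intro x μ hμ
    exact Integrable.mono' (integrable_const 1) (hm_meas x).aestronglyMeasurable
      (ae_of_all _ fun y => abs_le.2 ⟨by linarith [hm0 x y], hm1 x y⟩)
  have ha0 : ∀ x, 0 ≤ a x := fun x => integral_nonneg (hm0 x)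
  have ha1 : ∀ x, a x ≤ 1 := by
    intro x
    calc a x ≤ ∫ _, (1:ℝ) ∂q :=
          integral_mono (hmx_int x q inferInstance) (integrable_const 1) (hm1 x)
      _ = 1 := by simp
  -- ν applied to sets
  have hνapp : ∀ A : Set (EuclideanSpace ℝ (Fin d)), MeasurableSet A →
      ν A = ENNReal.ofReal ((∫ y in A, r y ∂q) / C) := by
    intro A hA
    rw [hν, Measure.smul_apply, smul_eq_mul, withDensity_apply _ hA,
      ← ofReal_integral_eq_lintegral_ofReal (hint.restrict) (ae_of_all _ fun y => (hr_pos y).le),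
      ← ENNReal.ofReal_inv_of_pos hCpos,
      ← ENNReal.ofReal_mul (inv_nonneg.2 hCpos.le), div_eq_mul_inv, mul_comm]
  have hint_nonneg : ∀ A : Set (EuclideanSpace ℝ (Fin d)), 0 ≤ ∫ y in A, r y ∂q :=
    fun A => integral_nonneg fun y => (hr_pos y).le
  have hν_toReal : ∀ A : Set (EuclideanSpace ℝ (Fin d)), MeasurableSet A →
      (ν A).toReal = (∫ y in A, r y ∂q) / C := by
    intro A hA
    rw [hνapp A hA, ENNReal.toReal_ofReal (div_nonneg (hint_nonneg A) hCpos.le)]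
  have hνprob : IsProbabilityMeasure ν := by
    constructor
    rw [hνapp Set.univ MeasurableSet.univ, Measure.restrict_univ, ← hC, div_self hCpos.ne']
    exact ENNReal.ofReal_one
  -- minorization, real version
  have hminor : ∀ (x : EuclideanSpace ℝ (Fin d)) (A : Set (EuclideanSpace ℝ (Fin d))),
      MeasurableSet A → C * δ * (ν A).toReal ≤ (P x A).toReal := by
    intro x A hA
    rw [hP x A hA, hν_toReal A hA]
    have h1 : δ * ∫ y in A, r y ∂q ≤ ∫ y in A, m x y ∂q := by
      rw [← integral_const_mul]
      exact integral_mono ((hint.restrict).smul δ)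
        (hmx_int x _ inferInstance) (fun y => hmδ x y)
    have h2 : 0 ≤ A.indicator (fun _ => (1:ℝ)) x * (1 - a x) := by
      apply mul_nonneg (Set.indicator_nonneg (fun _ _ => zero_le_one) x)
      linarith [ha1 x]
    have h3 : C * δ * ((∫ y in A, r y ∂q) / C) = δ * ∫ y in A, r y ∂q := by
      field_simp
    rw [h3]
    have h4 : (∫ y in A, m x y ∂q) + A.indicator (fun _ => (1:ℝ)) x * (1 - a x)
        = (∫ y in A, min 1 (pb y * p x / (pb x * p y)) ∂q) +
          A.indicator (fun _ => (1 : ℝ)) x * (1 - ∫ z, min 1 (pb z * p x / (pb x * p z)) ∂q) := rfl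
    rw [← h4]
    linarith [h1, h2]
  -- minorization, ENNReal version
  have part1 : ∀ (x : EuclideanSpace ℝ (Fin d)) (A : Set (EuclideanSpace ℝ (Fin d))),
      MeasurableSet A → ENNReal.ofReal (C * δ) * ν A ≤ P x A := by
    intro x A hA
    have hνfin : ν A ≠ ⊤ := measure_ne_top ν A
    have hPfin : P x A ≠ ⊤ := measure_ne_top (P x) A
    calc ENNReal.ofReal (C * δ) * ν A
        = ENNReal.ofReal (C * δ) * ENNReal.ofReal ((ν A).toReal) := by
          rw [ENNReal.ofReal_toReal hνfin]
      _ = ENNReal.ofReal (C * δ * (ν A).toReal) := by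
          rw [ENNReal.ofReal_mul (mul_nonneg hCpos.le hδ.le)]
      _ ≤ ENNReal.ofReal ((P x A).toReal) := ENNReal.ofReal_le_ofReal (hminor x A hA)
      _ = P x A := ENNReal.ofReal_toReal hPfin
  refine ⟨part1, ?_⟩
  -- part 2
  have hε0 : 0 < C * δ := mul_pos hCpos hδ
  have hε1 : C * δ ≤ 1 := by
    have h2 : ∫ x, δ * r x ∂q ≤ ∫ _, (1:ℝ) ∂q :=
      integral_mono (hint.smul δ) (integrable_const 1) hδr
    rw [integral_const_mul] at h2
    simp only [integral_const, measure_univ, probReal_univ, ENNReal.toReal_one, smul_eq_mul, one_mul, mul_one] at h2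
    rw [hC', mul_comm]
    exact h2
  -- integration against ν
  have hν_int : ∀ g : EuclideanSpace ℝ (Fin d) → ℝ,
      (∫ y, g y ∂ν) = C⁻¹ * ∫ y, r y * g y ∂q := by
    intro g
    rw [hν, integral_smul_measure]
    have hd2 : (fun x => ENNReal.ofReal (r x)) = (fun x => ((r x).toNNReal : ENNReal)) := rfl
    rw [hd2, integral_withDensity_eq_integral_smul hr_meas.real_toNNReal g]
    have h3 : (fun y => (r y).toNNReal • g y) = fun y => r y * g y := by
      funext y
      rw [NNReal.smul_def, Real.coe_toNNReal _ (hr_pos y).le, smul_eq_mul]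
    rw [h3, smul_eq_mul, ENNReal.toReal_inv, ENNReal.toReal_ofReal hCpos.le]
  -- invariance of ν
  have hinv : ∀ B : Set (EuclideanSpace ℝ (Fin d)), MeasurableSet B →
      ∫ y, (P y B).toReal ∂ν = (ν B).toReal := by
    intro B hB
    rw [hν_int, hν_toReal B hB]
    have hrm : ∀ y z, r y * m y z = min (r y) (r z) := by
      intro y z
      rw [hm_eq, mul_min_of_nonneg _ _ (hr_pos y).le, mul_one,
        mul_div_cancel₀ _ (hr_pos y).ne']
    have hb_sm : StronglyMeasurable (fun y => ∫ z in B, m y z ∂q) :=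
      hm_unc.stronglyMeasurable.integral_prod_right
    have hbB0 : ∀ y, 0 ≤ (∫ z in B, m y z ∂q) := fun y => integral_nonneg (fun z => hm0 y z)
    have hbB1 : ∀ y, (∫ z in B, m y z ∂q) ≤ 1 := by
      intro y
      calc (∫ z in B, m y z ∂q) ≤ ∫ _ in B, (1:ℝ) ∂q :=
            integral_mono (hmx_int y _ inferInstance) (integrable_const 1) (hm1 y)
        _ = (q B).toReal := by simp [Measure.real]
        _ ≤ 1 := by
            have := measure_mono (Set.subset_univ B) (μ := q)
            rw [measure_univ] at this
            exact ENNReal.toReal_le_of_le_ofReal zero_le_one (by simpa using this)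
    -- a is in [0,1] so all bounded by r
    have hT1i : Integrable (fun y => r y * ∫ z in B, m y z ∂q) q := by
      refine Integrable.mono' hint (hr_meas.aestronglyMeasurable.mul hb_sm.aestronglyMeasurable)
        (ae_of_all _ fun y => ?_)
      rw [Real.norm_eq_abs, abs_mul, abs_of_nonneg (hr_pos y).le, abs_of_nonneg (hbB0 y)]
      calc r y * (∫ z in B, m y z ∂q) ≤ r y * 1 :=
            mul_le_mul_of_nonneg_left (hbB1 y) (hr_pos y).le
        _ = r y := mul_one _
    have hT2i : Integrable
        (fun y => r y * (B.indicator (fun _ => (1:ℝ)) y * (1 - a y))) q := by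
      refine Integrable.mono' hint (hr_meas.aestronglyMeasurable.mul
        (((stronglyMeasurable_const.indicator hB).aestronglyMeasurable).mul
          ((stronglyMeasurable_const.sub ha_sm).aestronglyMeasurable)))
        (ae_of_all _ fun y => ?_)
      have hind : 0 ≤ B.indicator (fun _ => (1:ℝ)) y :=
        Set.indicator_nonneg (fun _ _ => zero_le_one) y
      rw [Real.norm_eq_abs, abs_mul, abs_of_nonneg (hr_pos y).le]
      have h5 : |B.indicator (fun _ => (1:ℝ)) y * (1 - a y)| ≤ 1 := by
        rw [abs_mul]
        have h6 : |1 - a y| ≤ 1 := by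
          rw [abs_le]; constructor <;> [linarith [ha1 y]; linarith [ha0 y]]
        have h7 : |B.indicator (fun _ => (1:ℝ)) y| ≤ 1 := by
          rw [abs_of_nonneg hind]
          by_cases hy : y ∈ B <;> simp [hy]
        calc |B.indicator (fun _ => (1:ℝ)) y| * |1 - a y| ≤ 1 * 1 :=
              mul_le_mul h7 h6 (abs_nonneg _) zero_le_one
          _ = 1 := one_mul 1
      calc r y * |B.indicator (fun _ => (1:ℝ)) y * (1 - a y)| ≤ r y * 1 :=
            mul_le_mul_of_nonneg_left h5 (hr_pos y).le
        _ = r y := mul_one _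
    -- Fubini for the symmetric min
    have hFub : ∫ y, (∫ z in B, min (r y) (r z) ∂q) ∂q
        = ∫ z in B, (∫ y, min (r y) (r z) ∂q) ∂q := by
      apply integral_integral_swap
      have hbig : Integrable (fun yz : _ × _ => r yz.1) (q.prod (q.restrict B)) := by
        have := hint.mul_prod (integrable_const (1:ℝ)) (ν := q.restrict B)
        simpa using this
      refine Integrable.mono' hbig
        (((hr_meas.comp measurable_fst).min (hr_meas.comp measurable_snd)).aestronglyMeasurable)
        (ae_of_all _ fun yz => ?_)
      have huc : Function.uncurry (fun y z => min (r y) (r z)) yz = min (r yz.1) (r yz.2) := rfl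
      rw [huc, Real.norm_eq_abs, abs_of_nonneg (le_min (hr_pos _).le (hr_pos _).le)]
      exact min_le_left _ _
    have key : ∫ y, r y * (P y B).toReal ∂q = ∫ y in B, r y ∂q := by
      have hexp : (fun y => r y * (P y B).toReal)
          = fun y => r y * (∫ z in B, m y z ∂q)
              + r y * (B.indicator (fun _ => (1:ℝ)) y * (1 - a y)) := by
        funext y
        rw [hP y B hB]
        ring
      rw [hexp, integral_add hT1i hT2i]
      have hstep1 : ∫ y, r y * (∫ z in B, m y z ∂q) ∂q = ∫ z in B, r z * a z ∂q := by
        have e1 : ∀ y, r y * (∫ z in B, m y z ∂q) = ∫ z in B, min (r y) (r z) ∂q := by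
          intro y
          rw [← integral_const_mul]
          exact integral_congr_ae (ae_of_all _ fun z => hrm y z)
        have e2 : ∀ z, (∫ y, min (r y) (r z) ∂q) = r z * a z := by
          intro z
          have : ∀ y, min (r y) (r z) = r z * m z y := by
            intro y
            rw [hrm z y, min_comm]
          rw [integral_congr_ae (ae_of_all _ this), integral_const_mul]
        calc ∫ y, r y * (∫ z in B, m y z ∂q) ∂q
            = ∫ y, (∫ z in B, min (r y) (r z) ∂q) ∂q :=
              integral_congr_ae (ae_of_all _ e1)
          _ = ∫ z in B, (∫ y, min (r y) (r z) ∂q) ∂q := hFub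
          _ = ∫ z in B, r z * a z ∂q := integral_congr_ae (ae_of_all _ fun z => e2 z)
      have hstep2 : ∫ y, r y * (B.indicator (fun _ => (1:ℝ)) y * (1 - a y)) ∂q
          = ∫ z in B, r z * (1 - a z) ∂q := by
        have e3 : (fun y => r y * (B.indicator (fun _ => (1:ℝ)) y * (1 - a y)))
            = B.indicator (fun y => r y * (1 - a y)) := by
          funext y
          by_cases hy : y ∈ B <;> simp [Set.indicator_of_mem, Set.indicator_of_notMem, hy]
        rw [e3, integral_indicator hB]
      rw [hstep1, hstep2, ← integral_add]
      · apply integral_congr_ae (ae_of_all _ fun z => ?_)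
        ring
      · refine Integrable.mono' hint.restrict
          ((hr_meas.aestronglyMeasurable.mul ha_sm.aestronglyMeasurable).restrict)
          (ae_of_all _ fun z => ?_)
        rw [Real.norm_eq_abs, abs_mul, abs_of_nonneg (hr_pos z).le, abs_of_nonneg (ha0 z)]
        calc r z * a z ≤ r z * 1 := mul_le_mul_of_nonneg_left (ha1 z) (hr_pos z).le
          _ = r z := mul_one _
      · refine Integrable.mono' hint.restrict
          ((hr_meas.aestronglyMeasurable.mul
            ((stronglyMeasurable_const.sub ha_sm).aestronglyMeasurable)).restrict)
          (ae_of_all _ fun z => ?_)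
        rw [Real.norm_eq_abs, abs_mul, abs_of_nonneg (hr_pos z).le]
        have h6 : |1 - a z| ≤ 1 := by
          rw [abs_le]; constructor <;> [linarith [ha1 z]; linarith [ha0 z]]
        calc r z * |1 - a z| ≤ r z * 1 := mul_le_mul_of_nonneg_left h6 (hr_pos z).le
          _ = r z := mul_one _
    rw [key, div_eq_inv_mul]
  -- Markov instances for iterates
  have instk : ∀ k : ℕ, IsMarkovKernel (kIter P k) := by
    intro k
    induction k with
    | zero => exact inferInstanceAs (IsMarkovKernel (Kernel.id))
    | succ n ih =>
        haveI := ih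
        exact inferInstanceAs (IsMarkovKernel (P ∘ₖ kIter P n))
  -- complement identities
  have hcompl : ∀ (μ : Measure (EuclideanSpace ℝ (Fin d))), IsProbabilityMeasure μ →
      ∀ B : Set (EuclideanSpace ℝ (Fin d)), MeasurableSet B →
      (μ B).toReal + (μ Bᶜ).toReal = 1 := by
    intro μ hμ B hB
    have h1 := measure_add_measure_compl hB (μ := μ)
    rw [measure_univ] at h1
    have := congrArg ENNReal.toReal h1
    rw [ENNReal.toReal_add (measure_ne_top μ B) (measure_ne_top μ Bᶜ)] at this
    simpa using this
  -- residual upper bound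
  have hres : ∀ (x : EuclideanSpace ℝ (Fin d)) (B : Set (EuclideanSpace ℝ (Fin d))),
      MeasurableSet B → (P x B).toReal ≤ 1 - C * δ + C * δ * (ν B).toReal := by
    intro x B hB
    have h1 := hminor x Bᶜ hB.compl
    have h2 := hcompl (P x) inferInstance B hB
    have h3 := hcompl ν hνprob B hB
    nlinarith [h1, h2, h3]
  -- the inductive claim
  have claim : ∀ (x : EuclideanSpace ℝ (Fin d)) (k : ℕ)
      (B : Set (EuclideanSpace ℝ (Fin d))), MeasurableSet B →
      |(kIter P k x B).toReal - (ν B).toReal| ≤ (1 - C * δ) ^ k := by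
    intro x k
    induction k with
    | zero =>
        intro B hB
        have hν1 : (ν B).toReal ≤ 1 := by
          have := measure_mono (Set.subset_univ B) (μ := ν)
          rw [measure_univ] at this
          exact ENNReal.toReal_le_of_le_ofReal zero_le_one (by simpa using this)
        have hν0 : 0 ≤ (ν B).toReal := ENNReal.toReal_nonneg
        have hk0 : kIter P 0 x = Measure.dirac x := Kernel.id_apply x
        rw [pow_zero, hk0, Measure.dirac_apply' x hB]
        by_cases hx : x ∈ B
        · rw [Set.indicator_of_mem hx]
          simp only [Pi.one_apply, ENNReal.toReal_one]
          rw [abs_le]; constructor <;> linarith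
        · rw [Set.indicator_of_notMem hx]
          simp only [ENNReal.toReal_zero]
          rw [abs_le]; constructor <;> linarith
    | succ k ih =>
        intro B hB
        haveI := instk k
        haveI : IsProbabilityMeasure (kIter P k x) := inferInstance
        -- the (k+1)-step measure as an integral
        have hcomp : (kIter P (k+1) x B).toReal = ∫ y, (P y B).toReal ∂(kIter P k x) := by
          have h1 : (kIter P (k+1)) x B = ∫⁻ y, P y B ∂(kIter P k x) :=
            Kernel.comp_apply' P (kIter P k) x hB
          rw [h1, ← integral_toReal (P.measurable_coe hB).aemeasurable
            (ae_of_all _ fun y => measure_lt_top (P y) B)]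
        set g : EuclideanSpace ℝ (Fin d) → ℝ :=
          fun y => (P y B).toReal - C * δ * (ν B).toReal with hg_def
        have hg_meas : Measurable g :=
          (P.measurable_coe hB).ennreal_toReal.sub measurable_const
        have hg0 : ∀ y, 0 ≤ g y := by
          intro y
          have := hminor y B hB
          simp only [hg_def]
          linarith
        have hgM : ∀ y, g y ≤ 1 - C * δ := by
          intro y
          have := hres y B hB
          simp only [hg_def]
          linarith
        have hPB_int : ∀ (μ : Measure (EuclideanSpace ℝ (Fin d))), IsProbabilityMeasure μ →
            Integrable g μ := by
          intro μ hμ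
          refine Integrable.mono' (integrable_const (1:ℝ)) hg_meas.aestronglyMeasurable
            (ae_of_all _ fun y => ?_)
          rw [Real.norm_eq_abs, abs_of_nonneg (hg0 y)]
          exact (hgM y).trans (by linarith)
        have hM : 0 ≤ 1 - C * δ := by linarith
        have hD : 0 ≤ (1 - C * δ) ^ k := pow_nonneg hM k
        have hup : ∀ s : Set (EuclideanSpace ℝ (Fin d)), MeasurableSet s →
            ((kIter P k x) s).toReal ≤ (ν s).toReal + (1 - C * δ) ^ k := by
          intro s hs
          have := abs_le.1 (ih s hs)
          linarith [this.2]
        have hdown : ∀ s : Set (EuclideanSpace ℝ (Fin d)), MeasurableSet s →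
            (ν s).toReal ≤ ((kIter P k x) s).toReal + (1 - C * δ) ^ k := by
          intro s hs
          have := abs_le.1 (ih s hs)
          linarith [this.1]
        have hL1 : ∫ y, g y ∂(kIter P k x) ≤ (∫ y, g y ∂ν) + (1 - C * δ) * (1 - C * δ) ^ k :=
          layercake_diff_le (kIter P k x) ν hg_meas hM hD hg0 hgM hup
        have hL2 : ∫ y, g y ∂ν ≤ (∫ y, g y ∂(kIter P k x)) + (1 - C * δ) * (1 - C * δ) ^ k :=
          layercake_diff_le ν (kIter P k x) hg_meas hM hD hg0 hgM hdown
        have hInt1 : ∫ y, g y ∂(kIter P k x)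
            = (∫ y, (P y B).toReal ∂(kIter P k x)) - C * δ * (ν B).toReal := by
          have hPi : Integrable (fun y => (P y B).toReal) (kIter P k x) := by
            refine Integrable.mono' (integrable_const (1:ℝ))
              (P.measurable_coe hB).ennreal_toReal.aestronglyMeasurable
              (ae_of_all _ fun y => ?_)
            rw [Real.norm_eq_abs, abs_of_nonneg ENNReal.toReal_nonneg]
            have h2 := hcompl (P y) inferInstance B hB
            linarith [ENNReal.toReal_nonneg (a := P y Bᶜ)]
          rw [hg_def]
          rw [integral_sub hPi (integrable_const _)]
          simp [measure_univ]
        have hInt2 : ∫ y, g y ∂ν = (ν B).toReal - C * δ * (ν B).toReal := by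
          have hPi : Integrable (fun y => (P y B).toReal) ν := by
            refine Integrable.mono' (integrable_const (1:ℝ))
              (P.measurable_coe hB).ennreal_toReal.aestronglyMeasurable
              (ae_of_all _ fun y => ?_)
            rw [Real.norm_eq_abs, abs_of_nonneg ENNReal.toReal_nonneg]
            have h2 := hcompl (P y) inferInstance B hB
            linarith [ENNReal.toReal_nonneg (a := P y Bᶜ)]
          rw [hg_def]
          rw [integral_sub hPi (integrable_const _)]
          rw [hinv B hB]
          simp [measure_univ]
        rw [hcomp, pow_succ]
        rw [abs_le]
        constructor
        · have := hL2
          rw [hInt1, hInt2] at this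
          linarith
        · have := hL1
          rw [hInt1, hInt2] at this
          linarith
  -- conclude
  intro x k
  haveI : Nonempty {B : Set (EuclideanSpace ℝ (Fin d)) // MeasurableSet B} :=
    ⟨⟨∅, MeasurableSet.empty⟩⟩
  apply ciSup_le
  intro B
  exact claim x k B.1 B.2
end
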